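/- arXiv:1904.05693 — 3 statements merged into one kernel-verified Lean document; each statement's English description precedes it below -/
import Mathlib

section
/- Let F/F_0 be a quadratic extension of non-Archimedean local fields of odd residue characteristic with involution σ, and let V be a 2-dimensional F-vector space with hermitian form h having an orthogonal basis (v_1, v_3) with h(v_i, v_i) = λ_i ∈ o_F^× such that (V, h) is isotropic. Then there exists a Witt basis (e_1, e_{-1}) of (V, h) with o_F v_1 ⊕ o_F v_3 = o_F e_1 ⊕ o_F e_{-1}. -/
/-- Let `F/F₀` be a quadratic extension of non-Archimedean local fields of odd residue
characteristic with involution `σ` and valuation `ν`, and let `V` be a `2`-dimensional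
`F`-vector space with hermitian form `h` having an orthogonal basis `(v₁, v₃)` with
`h(vᵢ,vᵢ) = λᵢ ∈ o_Fˣ`, such that `(V, h)` is isotropic.  Then there exists a Witt basis
`(e₁, e₋₁)` of `(V, h)` with `o_F v₁ ⊕ o_F v₃ = o_F e₁ ⊕ o_F e₋₁`. -/
theorem stmt4 {F : Type*} [Field F] (σ : F →+* F) (hσ : ∀ t, σ (σ t) = t)
    (hσne : ∃ t, σ t ≠ t)
    (ν : F → ℤ)
    (hνmul : ∀ u v : F, u ≠ 0 → v ≠ 0 → ν (u * v) = ν u + ν v)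
    (hνadd : ∀ u v : F, u ≠ 0 → v ≠ 0 → u + v ≠ 0 → min (ν u) (ν v) ≤ ν (u + v))
    (hνσ : ∀ u : F, ν (σ u) = ν u)
    (hν2 : ν (2 : F) = 0) (h2 : (2 : F) ≠ 0)
    {V : Type*} [AddCommGroup V] [Module F V]
    (h : V → V → F)
    (haddl : ∀ v v' w : V, h (v + v') w = h v w + h v' w)
    (hsmull : ∀ (a : F) (v w : V), h (a • v) w = a * h v w)
    (hconj : ∀ v w : V, h w v = σ (h v w))
    (v₁ v₃ : V) (hli : LinearIndependent F ![v₁, v₃])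
    (hspan : ∀ v : V, ∃ a b : F, v = a • v₁ + b • v₃)
    (lam₁ lam₃ : F) (hlam₁ : lam₁ ≠ 0) (hlam₃ : lam₃ ≠ 0)
    (hνlam₁ : ν lam₁ = 0) (hνlam₃ : ν lam₃ = 0)
    (hv₁ : h v₁ v₁ = lam₁) (hv₃ : h v₃ v₃ = lam₃) (horth : h v₁ v₃ = 0)
    (hiso : ∃ v : V, v ≠ 0 ∧ h v v = 0) :
    ∃ e₁ eneg : V, h e₁ e₁ = 0 ∧ h eneg eneg = 0 ∧ h e₁ eneg = 1 ∧
      {w : V | ∃ a b : F, (a = 0 ∨ 0 ≤ ν a) ∧ (b = 0 ∨ 0 ≤ ν b) ∧ w = a • v₁ + b • v₃} =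
      {w : V | ∃ a b : F, (a = 0 ∨ 0 ≤ ν a) ∧ (b = 0 ∨ 0 ≤ ν b) ∧ w = a • e₁ + b • eneg} := by
  classical
  -- basic valuation facts
  have hν1 : ν 1 = 0 := by
    have := hνmul 1 1 one_ne_zero one_ne_zero
    simp at this; omega
  have hνneg1 : ν (-1 : F) = 0 := by
    have := hνmul (-1) (-1) (by norm_num) (by norm_num)
    simp [hν1] at this; omega
  have hνneg : ∀ x : F, x ≠ 0 → ν (-x) = ν x := by
    intro x hx
    have := hνmul (-1) x (by norm_num) hx
    rw [neg_one_mul] at this; rw [this, hνneg1]; ring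
  have hνinv : ∀ x : F, x ≠ 0 → ν x⁻¹ = - ν x := by
    intro x hx
    have := hνmul x x⁻¹ hx (inv_ne_zero hx)
    rw [mul_inv_cancel₀ hx, hν1] at this; omega
  -- right additivity / sesquilinearity
  have haddr : ∀ v w w' : V, h v (w + w') = h v w + h v w' := by
    intro v w w'
    rw [hconj, haddl, map_add, ← hconj, ← hconj]
  have hsmulr : ∀ (a : F) (v w : V), h v (a • w) = σ a * h v w := by
    intro a v w
    rw [hconj, hsmull, map_mul, ← hconj]
  have horth' : h v₃ v₁ = 0 := by rw [hconj, horth, map_zero]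
  have hexp : ∀ a b c d : F, h (a • v₁ + b • v₃) (c • v₁ + d • v₃)
      = a * σ c * lam₁ + b * σ d * lam₃ := by
    intro a b c d
    rw [haddl, haddr, haddr, hsmull, hsmull, hsmull, hsmull, hsmulr, hsmulr, hsmulr, hsmulr,
      hv₁, hv₃, horth, horth']
    ring
  -- σ fixes the lambdas and 2
  have hσlam₁ : σ lam₁ = lam₁ := by rw [← hv₁, ← hconj v₁ v₁, hv₁]
  have hσlam₃ : σ lam₃ = lam₃ := by rw [← hv₃, ← hconj v₃ v₃, hv₃]
  have hσ2 : σ (2 : F) = 2 := by rw [map_ofNat]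
  -- extract the isotropic vector
  obtain ⟨v, hvne, hvv⟩ := hiso
  obtain ⟨a, b, rfl⟩ := hspan v
  have heq : a * σ a * lam₁ + b * σ b * lam₃ = 0 := by rw [← hexp, hvv]
  have hb : b ≠ 0 := by
    rintro rfl
    have ha : a = 0 := by
      by_contra ha
      have hσa : σ a ≠ 0 := fun hc => ha (by simpa [hσ] using congrArg σ hc)
      simp at heq
      rcases heq with (h' | h') | h' <;> tauto
    simp [ha] at hvne
  have ha : a ≠ 0 := by
    rintro rfl
    have hbz : b = 0 := by
      by_contra hb'
      have hσb : σ b ≠ 0 := fun hc => hb' (by simpa [hσ] using congrArg σ hc)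
      simp at heq
      rcases heq with (h' | h') | h' <;> tauto
    exact hb hbz
  set ε : F := a * b⁻¹ with hεdef
  have hε : ε ≠ 0 := mul_ne_zero ha (inv_ne_zero hb)
  have hσb : σ b ≠ 0 := fun hc => hb (by simpa [hσ] using congrArg σ hc)
  have hσε : σ ε = σ a * (σ b)⁻¹ := by rw [hεdef, map_mul, map_inv₀]
  have hkey : ε * σ ε * lam₁ = -lam₃ := by
    rw [hεdef, hσε]
    field_simp
    linear_combination heq
  have hσεne : σ ε ≠ 0 := fun hc => hε (by simpa [hσ] using congrArg σ hc)
  have hνε : ν ε = 0 := by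
    have h1 : ν (ε * σ ε * lam₁) = ν ε + ν (σ ε) + ν lam₁ := by
      rw [hνmul _ lam₁ (mul_ne_zero hε hσεne) hlam₁, hνmul _ _ hε hσεne]
    rw [hkey, hνneg lam₃ hlam₃, hνlam₃, hνσ, hνlam₁] at h1
    omega
  clear_value ε
  clear hεdef hσε hσb
  -- the Witt basis
  refine ⟨(ε * 2⁻¹) • v₁ + (2⁻¹ : F) • v₃, (-(ε * lam₃⁻¹)) • v₁ + (lam₃⁻¹) • v₃, ?_, ?_, ?_, ?_⟩
  · rw [hexp]
    simp only [map_mul, map_neg, map_inv₀, hσ2, hσlam₁, hσlam₃]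
    field_simp
    linear_combination hkey
  · rw [hexp]
    simp only [map_mul, map_neg, map_inv₀, hσ2, hσlam₁, hσlam₃]
    field_simp
    linear_combination hkey
  · rw [hexp]
    simp only [map_mul, map_neg, map_inv₀, hσ2, hσlam₁, hσlam₃]
    field_simp
    linear_combination (-1) * hkey
  -- lattice equality
  have h8 : (8:F) ≠ 0 := by
    have h8e : (8:F) = 2*2*2 := by norm_num
    rw [h8e]; exact mul_ne_zero (mul_ne_zero h2 h2) h2
  have hi2 : (2:F)⁻¹ ≠ 0 := inv_ne_zero h2
  have hνi2 : ν (2:F)⁻¹ = 0 := by rw [hνinv _ h2, hν2]; omega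
  have hνεi : ν ε⁻¹ = 0 := by rw [hνinv _ hε, hνε]; omega
  -- integrality closure lemmas
  have intadd : ∀ x y : F, (x = 0 ∨ 0 ≤ ν x) → (y = 0 ∨ 0 ≤ ν y) →
      (x + y = 0 ∨ 0 ≤ ν (x + y)) := by
    intro x y hx hy
    by_cases hx0 : x = 0
    · subst hx0; simpa using hy
    by_cases hy0 : y = 0
    · subst hy0; simpa using hx
    by_cases hxy : x + y = 0
    · exact Or.inl hxy
    right
    have h1 := hνadd x y hx0 hy0 hxy
    have h2 := hx.resolve_left hx0
    have h3 := hy.resolve_left hy0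
    omega
  have intmul : ∀ x c : F, (x = 0 ∨ 0 ≤ ν x) → c ≠ 0 → ν c = 0 →
      (x * c = 0 ∨ 0 ≤ ν (x * c)) := by
    intro x c hx hc hνc
    by_cases hx0 : x = 0
    · exact Or.inl (by rw [hx0, zero_mul])
    right
    rw [hνmul x c hx0 hc, hνc]
    have := hx.resolve_left hx0
    omega
  ext w
  simp only [Set.mem_setOf_eq]
  constructor
  · rintro ⟨c, d, hc, hd, rfl⟩
    refine ⟨c * ε⁻¹ + d, c * (-(lam₃ * 2⁻¹ * ε⁻¹)) + d * (lam₃ * 2⁻¹), ?_, ?_, ?_⟩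
    · exact intadd _ _ (intmul c ε⁻¹ hc (inv_ne_zero hε) hνεi) hd
    · refine intadd _ _ (intmul c _ hc ?_ ?_) (intmul d _ hd ?_ ?_)
      · exact neg_ne_zero.2 (mul_ne_zero (mul_ne_zero hlam₃ hi2) (inv_ne_zero hε))
      · rw [hνneg _ (mul_ne_zero (mul_ne_zero hlam₃ hi2) (inv_ne_zero hε)),
          hνmul _ _ (mul_ne_zero hlam₃ hi2) (inv_ne_zero hε), hνmul _ _ hlam₃ hi2,
          hνlam₃, hνi2, hνεi]; omega
      · exact mul_ne_zero hlam₃ hi2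
      · rw [hνmul _ _ hlam₃ hi2, hνlam₃, hνi2]; omega
    · have hE : ε * ε⁻¹ = 1 := mul_inv_cancel₀ hε
      have hL : lam₃ * lam₃⁻¹ = 1 := mul_inv_cancel₀ hlam₃
      have hT : (2:F) * 2⁻¹ = 1 := mul_inv_cancel₀ h2
      match_scalars
      · linear_combination (-2*c*2⁻¹)*hE + (-(c*2⁻¹*ε*ε⁻¹) + d*ε*2⁻¹)*hL + (-c)*hT
      · linear_combination (c*ε⁻¹*2⁻¹ - d*2⁻¹)*hL + (-d)*hT
  · rintro ⟨c, d, hc, hd, rfl⟩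
    refine ⟨c * (ε * 2⁻¹) + d * (-(ε * lam₃⁻¹)), c * 2⁻¹ + d * lam₃⁻¹, ?_, ?_, ?_⟩
    · refine intadd _ _ (intmul c _ hc ?_ ?_) (intmul d _ hd ?_ ?_)
      · exact mul_ne_zero hε hi2
      · rw [hνmul _ _ hε hi2, hνε, hνi2]; omega
      · exact neg_ne_zero.2 (mul_ne_zero hε (inv_ne_zero hlam₃))
      · rw [hνneg _ (mul_ne_zero hε (inv_ne_zero hlam₃)),
          hνmul _ _ hε (inv_ne_zero hlam₃), hνε, hνinv _ hlam₃, hνlam₃]; omega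
    · refine intadd _ _ (intmul c _ hc hi2 hνi2) (intmul d _ hd (inv_ne_zero hlam₃) ?_)
      rw [hνinv _ hlam₃, hνlam₃]; omega
    · match_scalars <;> ring
end

section
/- Let F/F_0 be a quadratic extension of non-Archimedean local fields with involution σ, V = V_1 ⊥ V_2 a 3-dimensional hermitian space with dim V_1 = 1, dim V_2 = 2, and β = β_1 + β_2 where β_1 ∈ F acts on V_1 with σ(β_1) = -β_1, and β_2 generates a quadratic field extension F[β_2]/F acting on V_2 with σ_h(β_2) = -β_2. Let D be the fixed field of σ_h in F[β_2], let λ: F[β_2] → F be the F-linear σ_h-equivariant map with λ(1) = 1 and λ(β_2) = β_1, let h' be the unique F[β_2]-hermitian form on V_2 with h = λ∘h' on V_2, and let d_1 ∈ D^×, d_2 ∈ F_0^× be the determinants of (V_2, h') and (V_1, h). Then there exists a nonzero v ∈ V with h(v,v) = h(v, βv) = 0 if and only if -d_1 d_2^{-1} ∈ Nr_{F[β_2]/D}(F[β_2]^×). -/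
/-!
Subtracting `β₁` times the first equation from the second gives `lam ((β₂ - β₁) * w) = 0` for
`w = h'(x₂, x₂)`. Since `ker lam = F ∙ (β₂ - β₁)`, this forces `w ∈ F`, and then the first
equation reads `h'(x₂, x₂) = -d₂ x₁ σ(x₁)`. Both coordinates are then nonzero, and dividing by
`x₂ τ(x₂)` exhibits `-d₁ d₂⁻¹` as the norm of `x₁ / x₂`; conversely a norm `y τ(y)` yields the
isotropic vector `(1, y⁻¹)`.
-/

open Module

section QuadraticExtension

variable {F E : Type*} [Field F] [Field E] [Algebra F E]

theorem notMem_range_algebraMap_of_adjoin_eq_top (hdeg : finrank F E ≠ 1) {β : E}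
    (hgen : Algebra.adjoin F {β} = ⊤) : β ∉ Set.range (algebraMap F E) := by
  rintro ⟨c, rfl⟩
  rw [Algebra.adjoin_singleton_algebraMap] at hgen
  exact hdeg (Subalgebra.bot_eq_top_iff_finrank_eq_one.1 hgen)

theorem exists_eq_algebraMap_add_algebraMap_mul (hdeg : finrank F E = 2) {β : E}
    (hβ : β ∉ Set.range (algebraMap F E)) (w : E) :
    ∃ u t : F, w = algebraMap F E u + algebraMap F E t * β := by
  have hli : LinearIndependent F ![1, β] :=
    (LinearIndependent.pair_iff' one_ne_zero).2 fun a ha =>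
      hβ ⟨a, by rw [← ha, Algebra.smul_def, mul_one]⟩
  have hspan : Submodule.span F {1, β} = ⊤ := by
    simpa only [Matrix.range_cons_cons_empty] using
      hli.span_eq_top_of_card_eq_finrank (by simp [hdeg])
  obtain ⟨u, t, h⟩ := Submodule.mem_span_pair.1 (hspan ▸ Submodule.mem_top : w ∈ _)
  exact ⟨u, t, by rw [← h, Algebra.smul_def, Algebra.smul_def, mul_one]⟩

theorem map_algebraMap_of_map_one {lam : E →ₗ[F] F} (hlam1 : lam 1 = 1) (c : F) :
    lam (algebraMap F E c) = c := by
  simpa [hlam1] using lam.map_algebraMap_mul 1 c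

theorem exists_eq_algebraMap_mul_sub_of_map_eq_zero (hdeg : finrank F E = 2) {β : E}
    (hβ : β ∉ Set.range (algebraMap F E)) {lam : E →ₗ[F] F} (hlam1 : lam 1 = 1) {b : F}
    (hlamβ : lam β = b) {z : E} (hz : lam z = 0) :
    ∃ t : F, z = algebraMap F E t * (β - algebraMap F E b) := by
  obtain ⟨u, t, rfl⟩ := exists_eq_algebraMap_add_algebraMap_mul hdeg hβ z
  have hu : u = -(t * b) := by
    simpa [lam.map_algebraMap_mul, map_algebraMap_of_map_one hlam1, hlamβ,
      add_eq_zero_iff_eq_neg] using hz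
  exact ⟨t, by rw [hu, map_neg, map_mul]; ring⟩

theorem mem_range_algebraMap_of_map_sub_mul_eq_zero (hdeg : finrank F E = 2) {β : E}
    (hβ : β ∉ Set.range (algebraMap F E)) {lam : E →ₗ[F] F} (hlam1 : lam 1 = 1) {b : F}
    (hlamβ : lam β = b) {w : E} (hw : lam ((β - algebraMap F E b) * w) = 0) :
    w ∈ Set.range (algebraMap F E) := by
  obtain ⟨t, ht⟩ := exists_eq_algebraMap_mul_sub_of_map_eq_zero hdeg hβ hlam1 hlamβ hw
  have hne : β - algebraMap F E b ≠ 0 := sub_ne_zero.2 fun h => hβ ⟨b, h.symm⟩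
  exact ⟨t, mul_left_cancel₀ hne (by rw [ht, mul_comm])⟩

theorem add_map_eq_zero_and_mul_add_map_mul_eq_zero_iff (hdeg : finrank F E = 2) {β : E}
    (hβ : β ∉ Set.range (algebraMap F E)) {lam : E →ₗ[F] F} (hlam1 : lam 1 = 1) {b : F}
    (hlamβ : lam β = b) (a : F) (w : E) :
    (a + lam w = 0 ∧ b * a + lam (β * w) = 0) ↔ w = -algebraMap F E a := by
  have hlam := map_algebraMap_of_map_one (E := E) hlam1
  constructor
  · rintro ⟨h₁, h₂⟩
    have hker : lam ((β - algebraMap F E b) * w) = 0 := by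
      rw [sub_mul, map_sub, lam.map_algebraMap_mul]
      simp only [Algebra.algebraMap_self, RingHom.id_apply]
      linear_combination h₂ - b * h₁
    obtain ⟨c, rfl⟩ := mem_range_algebraMap_of_map_sub_mul_eq_zero hdeg hβ hlam1 hlamβ hker
    rw [hlam] at h₁
    rw [← map_neg, eq_neg_of_add_eq_zero_right h₁]
  · rintro rfl
    rw [← map_neg, hlam, mul_comm, lam.map_mul_algebraMap, hlamβ]
    simp only [Algebra.algebraMap_self, RingHom.id_apply]
    constructor <;> ring

end QuadraticExtension

section NormEquation

variable {E : Type*} [Field E] (τ : E →+* E) {d D : E}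

theorem exists_neg_mul_inv_eq_mul_map_of_mul_mul_map_eq (hd : d ≠ 0) (hD : D ≠ 0) {x₁ x₂ : E}
    (hx : ¬(x₁ = 0 ∧ x₂ = 0)) (h : x₂ * d * τ x₂ = -(D * (x₁ * τ x₁))) :
    ∃ y : E, y ≠ 0 ∧ -(d * D⁻¹) = y * τ y := by
  have hx₂ : x₂ ≠ 0 := by
    rintro rfl
    have hx₁ : x₁ ≠ 0 := fun h₁ => hx ⟨h₁, rfl⟩
    exact mul_ne_zero hD (mul_ne_zero hx₁ ((map_ne_zero τ).2 hx₁)) (by simpa using h.symm)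
  have hx₁ : x₁ ≠ 0 := by
    rintro rfl
    exact mul_ne_zero (mul_ne_zero hx₂ hd) ((map_ne_zero τ).2 hx₂) (by simpa using h)
  have hτx₂ : τ x₂ ≠ 0 := (map_ne_zero τ).2 hx₂
  refine ⟨x₁ * x₂⁻¹, mul_ne_zero hx₁ (inv_ne_zero hx₂), ?_⟩
  rw [map_mul, map_inv₀]
  field_simp
  linear_combination -h

theorem inv_mul_mul_map_inv_eq_neg {y : E} (hy : y ≠ 0) (hD : D ≠ 0)
    (h : -(d * D⁻¹) = y * τ y) : y⁻¹ * d * τ y⁻¹ = -D := by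
  have hτy : τ y ≠ 0 := (map_ne_zero τ).2 hy
  rw [← neg_mul, eq_comm, eq_mul_inv_iff_mul_eq₀ hD] at h
  rw [map_inv₀]
  field_simp
  linear_combination h

end NormEquation

theorem stmt13_general {F E : Type*} [Field F] [Field E] [Algebra F E]
    (hdeg : Module.finrank F E = 2)
    (σ : F →+* F)
    (τ : E →+* E)
    (hcompat : ∀ x : F, τ (algebraMap F E x) = algebraMap F E (σ x))
    (β₂ : E) (hgen : Algebra.adjoin F {β₂} = ⊤)
    (β₁ : F)
    (lam : E →ₗ[F] F) (hlam1 : lam 1 = 1) (hlamβ : lam β₂ = β₁)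
    (d₁ : E) (hd₁ : d₁ ≠ 0)
    (d₂ : F) (hd₂ : d₂ ≠ 0) :
    (∃ (x₁ : F) (x₂ : E), ¬(x₁ = 0 ∧ x₂ = 0) ∧
        d₂ * (x₁ * σ x₁) + lam (x₂ * d₁ * τ x₂) = 0 ∧
        β₁ * (d₂ * (x₁ * σ x₁)) + lam (β₂ * (x₂ * d₁ * τ x₂)) = 0) ↔
      ∃ y : E, y ≠ 0 ∧ -(d₁ * (algebraMap F E d₂)⁻¹) = y * τ y := by
  have hβ₂ := notMem_range_algebraMap_of_adjoin_eq_top (by omega) hgen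
  have hd₂E : algebraMap F E d₂ ≠ 0 := (map_ne_zero _).2 hd₂
  simp_rw [add_map_eq_zero_and_mul_add_map_mul_eq_zero_iff hdeg hβ₂ hlam1 hlamβ, map_mul,
    ← hcompat]
  constructor
  · rintro ⟨x₁, x₂, hx, h⟩
    exact exists_neg_mul_inv_eq_mul_map_of_mul_mul_map_eq τ hd₁ hd₂E (by simpa using hx) h
  · rintro ⟨y, hy, h⟩
    exact ⟨1, y⁻¹, by simp, by simpa using inv_mul_mul_map_inv_eq_neg τ hy hd₂E h⟩

/-- Criterion for non-emptiness of `X_β(F₀)` for type (B) strata.  `F/F₀` quadratic with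
involution `σ` (char of residue field odd, so `2 ≠ 0`), `V = V₁ ⊥ V₂` with `V₁ = F` of
determinant `d₂ ∈ F₀ˣ` and `V₂ = E = F[β₂]` a quadratic extension with adjoint involution
`τ = σ_h` (fixed field `D`), carrying the rank-one `E`-hermitian form
`h'(x,y) = x·d₁·τ(y)` with `d₁ ∈ Dˣ`; `lam : E → F` is the `F`-linear `τ`-equivariant map
with `lam 1 = 1`, `lam β₂ = β₁`, and `h = lam ∘ h'` on `V₂`.  Then there is a nonzero
`v = (x₁, x₂)` with `h(v,v) = 0 = h(v, βv)` iff `-d₁d₂⁻¹ ∈ Nr_{E/D}(Eˣ)`. -/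
theorem stmt13 {F E : Type*} [Field F] [Field E] [Algebra F E]
    (hdeg : Module.finrank F E = 2)
    (σ : F →+* F) (hσ : ∀ t, σ (σ t) = t) (hσne : ∃ t, σ t ≠ t)
    (h2 : (2 : F) ≠ 0)
    (τ : E →+* E) (hτ : ∀ t, τ (τ t) = t) (hτne : ∃ t, τ t ≠ t)
    (hcompat : ∀ x : F, τ (algebraMap F E x) = algebraMap F E (σ x))
    (β₂ : E) (hβ₂skew : τ β₂ = -β₂) (hgen : Algebra.adjoin F {β₂} = ⊤)
    (β₁ : F) (hβ₁skew : σ β₁ = -β₁)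
    (lam : E →ₗ[F] F) (hlam1 : lam 1 = 1) (hlamβ : lam β₂ = β₁)
    (hequiv : ∀ z : E, lam (τ z) = σ (lam z))
    (d₁ : E) (hd₁ : d₁ ≠ 0) (hd₁fix : τ d₁ = d₁)
    (d₂ : F) (hd₂ : d₂ ≠ 0) (hd₂fix : σ d₂ = d₂) :
    (∃ (x₁ : F) (x₂ : E), ¬(x₁ = 0 ∧ x₂ = 0) ∧
        d₂ * (x₁ * σ x₁) + lam (x₂ * d₁ * τ x₂) = 0 ∧
        β₁ * (d₂ * (x₁ * σ x₁)) + lam (β₂ * (x₂ * d₁ * τ x₂)) = 0) ↔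
      ∃ y : E, y ≠ 0 ∧ -(d₁ * (algebraMap F E d₂)⁻¹) = y * τ y :=
  stmt13_general hdeg σ τ hcompat β₂ hgen β₁ lam hlam1 hlamβ d₁ hd₁ d₂ hd₂
end

section
/- Let F/F_0 be a quadratic extension of non-Archimedean local fields of odd residue characteristic with involution σ, and let G = U(2,1)(F/F_0) with respect to a Witt basis (e_1, e_0, e_{-1}) of the hermitian space (V, h). Let U_der(r) = { u(0, y) : y ∈ δ p_{F_0}^r } where u(0,y) is the unipotent matrix with rows (1, 0, y), (0,1,0), (0,0,1), δ ∈ F satisfies σ(δ) = -δ, and ψ_0 is an additive character of F_0 with conductor p_{F_0}. For β ∈ End_F(V) with σ_h(β) = -β and g ∈ G, define ψ_β^g(X) = ψ_F(tr(β(id - gXg^{-1}))) with ψ_F = ψ_0 ∘ tr_{F/F_0}. Then the character ψ_β^g of U_der(r) is nontrivial if and only if ν_{F_0}(δ h(g e_1, β g e_1)) ≤ -r. -/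
open Matrix

/-- Lemma 2.2 of the paper (the basic inequality).  `F/F₀` is a quadratic extension of
non-Archimedean local fields of odd residue characteristic with Galois involution `σ`,
`ψ₀` an additive character of `F₀` with conductor `p_{F₀}`, `ψ_F = ψ₀ ∘ tr_{F/F₀}`, and
`δ ∈ F` with `σ(δ) = -δ`.  The group `G = U(2,1)` is realised with respect to a Witt basis
as the unitary group of `J = antidiag(1,1,1)`, `b = β` is a skew matrix
(`σ_h(β) = J·σ(β)ᵀ·J = -β`), `g ∈ G`, and `U_der(r) = {1 + stdBasisMatrix 0 2 (δt) : t ∈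
p_{F₀}^r}`.  Then the character `ψ_β^g : X ↦ ψ_F(tr(β(1 - gXg⁻¹)))` of `U_der(r)` is
nontrivial if and only if `ν_{F₀}(δ·h(g e₁, β g e₁)) ≤ -r`, where
`h(v,w) = Σ vᵢ Jᵢⱼ σ(wⱼ)` and the `F₀`-element `c` with
`algebraMap c = δ·h(g e₁, β g e₁)` records the latter quantity. -/
theorem stmt15 {F₀ F : Type*} [Field F₀] [Field F] [Algebra F₀ F]
    (hdim : Module.finrank F₀ F = 2)
    (σ : F ≃ₐ[F₀] F) (hσ : ∀ t, σ (σ t) = t) (hσne : ∃ t, σ t ≠ t)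
    (ν₀ : F₀ → ℤ)
    (hν₀mul : ∀ u v : F₀, u ≠ 0 → v ≠ 0 → ν₀ (u * v) = ν₀ u + ν₀ v)
    (hν₀add : ∀ u v : F₀, u ≠ 0 → v ≠ 0 → u + v ≠ 0 → min (ν₀ u) (ν₀ v) ≤ ν₀ (u + v))
    (hν₀2 : ν₀ (2 : F₀) = 0) (h2 : (2 : F₀) ≠ 0)
    (ψ₀ : AddChar F₀ ℂ)
    (hψtriv : ∀ t : F₀, t ≠ 0 → 1 ≤ ν₀ t → ψ₀ t = 1)
    (hψnontriv : ∃ t : F₀, ν₀ t = 0 ∧ ψ₀ t ≠ 1)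
    (δ : F) (hδ : δ ≠ 0) (hδskew : σ δ = -δ)
    (J : Matrix (Fin 3) (Fin 3) F) (hJ : J = !![0, 0, 1; 0, 1, 0; 1, 0, 0])
    (b : Matrix (Fin 3) (Fin 3) F)
    (hbskew : J * (b.map fun t => σ t)ᵀ * J = -b)
    (g : Matrix (Fin 3) (Fin 3) F) (hg : IsUnit g.det)
    (hgU : gᵀ * J * (g.map fun t => σ t) = J)
    (r : ℤ) (c : F₀)
    (hc : algebraMap F₀ F c =
      δ * dotProduct (g.mulVec ![1, 0, 0])
        (J.mulVec fun i => σ (b.mulVec (g.mulVec ![1, 0, 0]) i))) :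
    (∃ t : F₀, (t = 0 ∨ r ≤ ν₀ t) ∧
        ψ₀ (Algebra.trace F₀ F (Matrix.trace (b *
          ((1 : Matrix (Fin 3) (Fin 3) F) -
            g * (1 + Matrix.single 0 2 (δ * algebraMap F₀ F t)) * g⁻¹)))) ≠ 1) ↔
      (c ≠ 0 ∧ ν₀ c ≤ -r) := by
  subst hJ
  have : Module.Finite F₀ F := Module.finite_of_finrank_pos (by rw [hdim]; norm_num)
  -- the inverse of g
  have hgU2 : (g.map fun t => σ t)ᵀ * !![(0:F), 0, 1; 0, 1, 0; 1, 0, 0] * g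
      = !![(0:F), 0, 1; 0, 1, 0; 1, 0, 0] := by
    ext i j
    have h1 := congrArg σ (congrFun (congrFun hgU i) j)
    fin_cases i <;> fin_cases j <;>
      simp [Matrix.mul_apply, Fin.sum_univ_three, Matrix.map_apply, hσ,
        Matrix.vecHead, Matrix.vecTail] at h1 ⊢ <;>
      linear_combination h1
  have hJJ : (!![(0:F), 0, 1; 0, 1, 0; 1, 0, 0]) * !![(0:F), 0, 1; 0, 1, 0; 1, 0, 0] = 1 := by
    ext i j; fin_cases i <;> fin_cases j <;>
      simp [Matrix.mul_apply, Fin.sum_univ_three, Matrix.one_apply, Matrix.vecHead, Matrix.vecTail]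
  have hgig : (!![(0:F), 0, 1; 0, 1, 0; 1, 0, 0] * (g.map fun t => σ t)ᵀ *
      !![(0:F), 0, 1; 0, 1, 0; 1, 0, 0]) * g = 1 := by
    calc !![(0:F), 0, 1; 0, 1, 0; 1, 0, 0] * (g.map fun t => σ t)ᵀ *
        !![(0:F), 0, 1; 0, 1, 0; 1, 0, 0] * g
        = !![(0:F), 0, 1; 0, 1, 0; 1, 0, 0] *
            ((g.map fun t => σ t)ᵀ * !![(0:F), 0, 1; 0, 1, 0; 1, 0, 0] * g) := by
          rw [mul_assoc, mul_assoc, mul_assoc]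
      _ = 1 := by rw [hgU2, hJJ]
  have hginv : g⁻¹ = !![(0:F), 0, 1; 0, 1, 0; 1, 0, 0] * (g.map fun t => σ t)ᵀ *
      !![(0:F), 0, 1; 0, 1, 0; 1, 0, 0] := Matrix.inv_eq_left_inv hgig
  have hggi : g * (!![(0:F), 0, 1; 0, 1, 0; 1, 0, 0] * (g.map fun t => σ t)ᵀ *
      !![(0:F), 0, 1; 0, 1, 0; 1, 0, 0]) = 1 := mul_eq_one_comm.mpr hgig
  -- the skewness of the hermitian product of ge₁ with βge₁
  set A : F := dotProduct (g.mulVec ![1, 0, 0])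
      ((!![(0:F), 0, 1; 0, 1, 0; 1, 0, 0]).mulVec fun i =>
        σ (b.mulVec (g.mulVec ![1, 0, 0]) i)) with hA
  have hσA : σ A = -A := by
    have h1 : σ (δ * A) = δ * A := by rw [← hc]; exact σ.commutes c
    rw [_root_.map_mul, hδskew] at h1
    have := mul_left_cancel₀ hδ (show δ * σ A = δ * (-A) by linear_combination -h1)
    exact this
  -- the value of the character
  have hval : ∀ t : F₀, Algebra.trace F₀ F (Matrix.trace (b *
      ((1 : Matrix (Fin 3) (Fin 3) F) -
        g * (1 + Matrix.single 0 2 (δ * algebraMap F₀ F t)) * g⁻¹))) = 2 * (t * c) := by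
    intro t
    set s : F := δ * algebraMap F₀ F t with hs
    have hexp : (1 : Matrix (Fin 3) (Fin 3) F) -
        g * (1 + Matrix.single 0 2 s) * g⁻¹ =
        -(g * Matrix.single 0 2 s *
          (!![(0:F), 0, 1; 0, 1, 0; 1, 0, 0] * (g.map fun t => σ t)ᵀ *
            !![(0:F), 0, 1; 0, 1, 0; 1, 0, 0])) := by
      rw [hginv, mul_add, mul_one, add_mul, hggi]
      abel
    rw [hexp, mul_neg, Matrix.trace_neg]
    have hmain : Matrix.trace (b * (g * Matrix.single 0 2 s *
        (!![(0:F), 0, 1; 0, 1, 0; 1, 0, 0] * (g.map fun t => σ t)ᵀ *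
          !![(0:F), 0, 1; 0, 1, 0; 1, 0, 0]))) = s * σ A := by
      rw [hA]
      simp [Matrix.trace, Matrix.mul_apply, Fin.sum_univ_three, Matrix.map_apply, Matrix.mulVec,
        dotProduct, Matrix.vecMul, Matrix.single, Matrix.diag, hσ,
        Matrix.vecHead, Matrix.vecTail, Matrix.of_apply]
      ring
    rw [hmain, hσA, hs]
    have h3 : -(δ * algebraMap F₀ F t * -A) = algebraMap F₀ F (t * c) := by
      rw [_root_.map_mul, hc]; ring
    rw [h3, Algebra.trace_algebraMap, hdim]
    push_cast
    ring
  simp only [hval]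
  -- elementary valuation facts
  have hψ0 : ψ₀ (0 : F₀) = 1 := by simp
  have hν1 : ν₀ 1 = 0 := by
    have h := hν₀mul 1 1 one_ne_zero one_ne_zero
    rw [one_mul] at h; omega
  have hνinv : ∀ u : F₀, u ≠ 0 → ν₀ u⁻¹ = -ν₀ u := by
    intro u hu
    have h := hν₀mul u u⁻¹ hu (inv_ne_zero hu)
    rw [mul_inv_cancel₀ hu] at h; omega
  constructor
  · rintro ⟨t, ht, hne⟩
    have htne : t ≠ 0 := fun h => hne (by rw [h, zero_mul, mul_zero]; exact hψ0)
    have hcne : c ≠ 0 := fun h => hne (by rw [h, mul_zero, mul_zero]; exact hψ0)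
    have hprod : (2 : F₀) * (t * c) ≠ 0 := mul_ne_zero h2 (mul_ne_zero htne hcne)
    have hle : ν₀ ((2 : F₀) * (t * c)) ≤ 0 := by
      by_contra hlt
      push_neg at hlt
      exact hne (hψtriv _ hprod (by omega))
    rw [hν₀mul _ _ h2 (mul_ne_zero htne hcne), hν₀mul _ _ htne hcne, hν₀2] at hle
    rcases ht with rfl | hrt
    · exact absurd rfl htne
    · exact ⟨hcne, by omega⟩
  · rintro ⟨hcne, hcr⟩
    obtain ⟨t₀, ht₀v, ht₀ne⟩ := hψnontriv
    have h2c : (2 : F₀) * c ≠ 0 := mul_ne_zero h2 hcne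
    refine ⟨t₀ * ((2 : F₀) * c)⁻¹, Or.inr ?_, ?_⟩
    · have ht₀0 : t₀ ≠ 0 := fun h => ht₀ne (h ▸ hψ0)
      rw [hν₀mul _ _ ht₀0 (inv_ne_zero h2c), hνinv _ h2c, hν₀mul _ _ h2 hcne, ht₀v, hν₀2]
      omega
    · have heq : (2 : F₀) * (t₀ * ((2 : F₀) * c)⁻¹ * c) = t₀ := by
        field_simp
      rw [heq]
      exact ht₀ne
end
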